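/- arXiv:1809.07159 — 4 statements merged into one kernel-verified Lean document; each statement's English description precedes it below -/
import Mathlib

section
/- Let O₁, O₂ be centers of two disjoint disks of radius R (so |O₁O₂| > 2R), let β ∈ [0, π/12], and let P₁, P₂ be points with dist(Pᵢ, Oᵢ) = R. If |P₁P₂| ≤ √(|O₁O₂|² + R² − 2R|O₁O₂|cos β) − R, then the angle ∠O₂O₁P₁ ≤ β and the angle ∠O₁O₂P₂ ≤ β. -/
open Real EuclideanGeometry

lemma angle_aux (R β d : ℝ) (hR : 0 < R) (hβ0 : 0 ≤ β) (hβπ : β ≤ π)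
    (O A P : EuclideanSpace ℝ (Fin 2))
    (hd : dist O A = d) (hdR : 2 * R < d)
    (hP : dist P O = R)
    (hPA : dist P A ≤ Real.sqrt (d ^ 2 + R ^ 2 - 2 * R * d * Real.cos β)) :
    ∠ A O P ≤ β := by
  have hd0 : 0 < d := by linarith
  have hE : (0:ℝ) ≤ d ^ 2 + R ^ 2 - 2 * R * d * Real.cos β := by
    have h1 : 2 * R * d * Real.cos β ≤ 2 * R * d := by
      have hc : Real.cos β ≤ 1 := Real.cos_le_one β
      nlinarith [mul_pos hR hd0]
    nlinarith
  have hsq : dist P A ^ 2 ≤ d ^ 2 + R ^ 2 - 2 * R * d * Real.cos β := by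
    have h0 : (0:ℝ) ≤ dist P A := dist_nonneg
    calc dist P A ^ 2 ≤ Real.sqrt (d ^ 2 + R ^ 2 - 2 * R * d * Real.cos β) ^ 2 := by
          apply pow_le_pow_left₀ h0 hPA
      _ = d ^ 2 + R ^ 2 - 2 * R * d * Real.cos β := Real.sq_sqrt hE
  have hlc := EuclideanGeometry.law_cos P O A
  rw [hP, show dist A O = d by rw [dist_comm]; exact hd] at hlc
  have hangle : ∠ P O A = ∠ A O P := EuclideanGeometry.angle_comm P O A
  rw [hangle] at hlc
  have hcos : Real.cos β ≤ Real.cos (∠ A O P) := by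
    rw [pow_two] at hsq
    have h2 : (2*R*d) * Real.cos β ≤ (2*R*d) * Real.cos (∠ A O P) := by linarith
    exact le_of_mul_le_mul_left h2 (by positivity)
  by_contra hlt
  push_neg at hlt
  have h1 : Real.cos (∠ A O P) < Real.cos β :=
    Real.cos_lt_cos_of_nonneg_of_le_pi hβ0 (EuclideanGeometry.angle_le_pi A O P) hlt
  linarith

theorem stmt_5 (R β : ℝ) (hR : 0 < R) (hβ : β ∈ Set.Icc 0 (π / 12))
    (O₁ O₂ P₁ P₂ : EuclideanSpace ℝ (Fin 2))
    (hdisj : 2 * R < dist O₁ O₂)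
    (h₁ : dist P₁ O₁ = R) (h₂ : dist P₂ O₂ = R)
    (hbad : dist P₁ P₂ ≤
      Real.sqrt ((dist O₁ O₂) ^ 2 + R ^ 2 - 2 * R * dist O₁ O₂ * Real.cos β) - R) :
    ∠ O₂ O₁ P₁ ≤ β ∧ ∠ O₁ O₂ P₂ ≤ β := by
  obtain ⟨hβ0, hβ12⟩ := hβ
  have hβπ : β ≤ π := le_trans hβ12 (by linarith [Real.pi_pos])
  set d := dist O₁ O₂ with hd
  have hA : dist P₁ O₂ ≤ Real.sqrt (d ^ 2 + R ^ 2 - 2 * R * d * Real.cos β) := by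
    calc dist P₁ O₂ ≤ dist P₁ P₂ + dist P₂ O₂ := dist_triangle _ _ _
      _ ≤ Real.sqrt (d ^ 2 + R ^ 2 - 2 * R * d * Real.cos β) - R + R := by
          rw [h₂]; linarith
      _ = _ := by ring
  have hB : dist P₂ O₁ ≤ Real.sqrt (d ^ 2 + R ^ 2 - 2 * R * d * Real.cos β) := by
    calc dist P₂ O₁ ≤ dist P₂ P₁ + dist P₁ O₁ := dist_triangle _ _ _
      _ ≤ Real.sqrt (d ^ 2 + R ^ 2 - 2 * R * d * Real.cos β) - R + R := by
          rw [h₁, dist_comm]; linarith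
      _ = _ := by ring
  constructor
  · exact angle_aux R β d hR hβ0 hβπ O₁ O₂ P₁ rfl hdisj h₁ hA
  · exact angle_aux R β d hR hβ0 hβπ O₂ O₁ P₂ (dist_comm O₂ O₁) hdisj h₂ hB
end

section
/- Let P₁, P₂ be points with dist(P₁, O₁) = R, dist(P₂, O₂) = R, and let β ∈ (0, π/12]. If the angle ∠O₁O₂P₂ > β, then |P₁P₂| > √(|O₁O₂|² + R² − 2R|O₁O₂|cos β) − R, provided |O₁O₂| ≥ 2R. -/
open Real EuclideanGeometry

theorem stmt_7 (R β : ℝ) (hR : 0 < R) (hβ₀ : 0 < β) (hβ₁ : β ≤ π / 12)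
    (O₁ O₂ P₁ P₂ : EuclideanSpace ℝ (Fin 2))
    (hd : 2 * R ≤ dist O₁ O₂)
    (h₁ : dist P₁ O₁ = R) (h₂ : dist P₂ O₂ = R)
    (hang : β < ∠ O₁ O₂ P₂) :
    Real.sqrt ((dist O₁ O₂) ^ 2 + R ^ 2 - 2 * R * dist O₁ O₂ * Real.cos β) - R
      < dist P₁ P₂ := by
  set d := dist O₁ O₂ with hd'
  have hdpos : 0 < d := lt_of_lt_of_le (by linarith) hd
  have hcos : Real.cos (∠ O₁ O₂ P₂) < Real.cos β := by
    apply Real.cos_lt_cos_of_nonneg_of_le_pi hβ₀.le (EuclideanGeometry.angle_le_pi _ _ _) hang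
  have hlc : dist O₁ P₂ ^ 2 = d ^ 2 + R ^ 2 - 2 * R * d * Real.cos (∠ O₁ O₂ P₂) := by
    have := EuclideanGeometry.law_cos O₁ O₂ P₂
    rw [h₂] at this
    linarith [this]
  have hlt : d ^ 2 + R ^ 2 - 2 * R * d * Real.cos β < dist O₁ P₂ ^ 2 := by
    rw [hlc]
    have : 2 * R * d > 0 := by positivity
    nlinarith
  have hsq : Real.sqrt (d ^ 2 + R ^ 2 - 2 * R * d * Real.cos β) < dist O₁ P₂ := by
    calc Real.sqrt (d ^ 2 + R ^ 2 - 2 * R * d * Real.cos β)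
        < Real.sqrt (dist O₁ P₂ ^ 2) := Real.sqrt_lt_sqrt (by nlinarith [Real.cos_le_one β, sq_nonneg (d - R)]) hlt
      _ = dist O₁ P₂ := Real.sqrt_sq dist_nonneg
  have htri : dist O₁ P₂ ≤ dist O₁ P₁ + dist P₁ P₂ := dist_triangle _ _ _
  rw [dist_comm O₁ P₁, h₁] at htri
  linarith
end

section
/- If a disk P₁P₂ edge is 'good', i.e. |P₁P₂| > √(|O₁O₂|² + R² − 2R|O₁O₂|cos β) − R with dist(Pᵢ,Oᵢ) = R and |O₁O₂| ≥ 2R, then |O₁O₂| ≤ |P₁P₂| + (1 + cos β)·R. -/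
open Real

theorem stmt_8 (R β : ℝ) (hR : 0 < R) (hβ : β ∈ Set.Icc 0 (π / 12))
    (O₁ O₂ P₁ P₂ : EuclideanSpace ℝ (Fin 2))
    (hd : 2 * R ≤ dist O₁ O₂)
    (h₁ : dist P₁ O₁ = R) (h₂ : dist P₂ O₂ = R)
    (hgood : Real.sqrt ((dist O₁ O₂) ^ 2 + R ^ 2 - 2 * R * dist O₁ O₂ * Real.cos β) - R
      < dist P₁ P₂) :
    dist O₁ O₂ ≤ dist P₁ P₂ + (1 + Real.cos β) * R := by
  set d := dist O₁ O₂ with hdd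
  have hc1 : Real.cos β ≤ 1 := Real.cos_le_one β
  have hc0 : -1 ≤ Real.cos β := Real.neg_one_le_cos β
  have hnn : 0 ≤ d - R * Real.cos β := by nlinarith
  have key : d - R * Real.cos β ≤
      Real.sqrt (d ^ 2 + R ^ 2 - 2 * R * d * Real.cos β) := by
    rw [show d ^ 2 + R ^ 2 - 2 * R * d * Real.cos β =
      (d - R * Real.cos β) ^ 2 + R ^ 2 * (1 - Real.cos β ^ 2) by ring]
    refine le_trans ?_ (Real.sqrt_le_sqrt (by nlinarith [mul_nonneg (mul_nonneg hR.le hR.le) (mul_nonneg (by linarith : (0:ℝ) ≤ 1 - Real.cos β) (by linarith : (0:ℝ) ≤ 1 + Real.cos β))] : (d - R * Real.cos β) ^ 2 ≤ _))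
    rw [Real.sqrt_sq hnn]
  nlinarith [hgood, key]
end

section
/- Let O₁, O₂, O₃ be centers of three disks of radius R and P₁, P₂, P₃ points with dist(Pᵢ, Oᵢ) = R. Then |O₁O₂| + |O₂O₃| + |O₃O₁| ≤ |P₁P₂| + |P₂P₃| + |P₃P₁| + 3√3·R. -/
/-!
Writing `Oᵢ = Pᵢ + uᵢ` with `‖uᵢ‖ = R`, the triangle inequality bounds the excess of the center
tour over the boundary tour by the perimeter of the triangle `u₁u₂u₃`. For any three vectors of
norm at most `R`,
`‖a - b‖² + ‖b - c‖² + ‖c - a‖² = 3 (‖a‖² + ‖b‖² + ‖c‖²) - ‖a + b + c‖² ≤ 9 R²`,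
and Cauchy–Schwarz turns this into the perimeter bound `3 √3 R`.
-/

section InnerProductSpace

variable {E : Type*} [NormedAddCommGroup E] [InnerProductSpace ℝ E]

theorem norm_sub_sq_add_norm_sub_sq_add_norm_sub_sq (a b c : E) :
    ‖a - b‖ ^ 2 + ‖b - c‖ ^ 2 + ‖c - a‖ ^ 2 =
      3 * (‖a‖ ^ 2 + ‖b‖ ^ 2 + ‖c‖ ^ 2) - ‖a + b + c‖ ^ 2 := by
  simp only [norm_sub_sq_real, norm_add_sq_real, inner_add_left, real_inner_comm a c]
  ring

theorem dist_add_dist_add_dist_le_of_norm_le {a b c : E} {R : ℝ}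
    (ha : ‖a‖ ≤ R) (hb : ‖b‖ ≤ R) (hc : ‖c‖ ≤ R) :
    dist a b + dist b c + dist c a ≤ 3 * √3 * R := by
  have hR : 0 ≤ R := (norm_nonneg a).trans ha
  have hsq : dist a b ^ 2 + dist b c ^ 2 + dist c a ^ 2 ≤ 9 * R ^ 2 := by
    rw [dist_eq_norm, dist_eq_norm, dist_eq_norm, norm_sub_sq_add_norm_sub_sq_add_norm_sub_sq]
    nlinarith [pow_le_pow_left₀ (norm_nonneg a) ha 2, pow_le_pow_left₀ (norm_nonneg b) hb 2,
      pow_le_pow_left₀ (norm_nonneg c) hc 2, sq_nonneg ‖a + b + c‖]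
  have hsqrt : √3 ^ 2 = 3 := Real.sq_sqrt (by norm_num)
  apply abs_le_of_sq_le_sq' _ (by positivity) |>.2
  nlinarith [sq_nonneg (dist a b - dist b c), sq_nonneg (dist b c - dist c a),
    sq_nonneg (dist c a - dist a b)]

end InnerProductSpace

theorem dist_le_dist_add_dist_sub_sub {G : Type*} [SeminormedAddCommGroup G] (x y p q : G) :
    dist x y ≤ dist p q + dist (x - p) (y - q) := by
  simpa using dist_add_add_le p (x - p) q (y - q)

theorem stmt_12_general (R : ℝ)
    (O₁ O₂ O₃ P₁ P₂ P₃ : EuclideanSpace ℝ (Fin 2))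
    (h₁ : dist P₁ O₁ = R) (h₂ : dist P₂ O₂ = R) (h₃ : dist P₃ O₃ = R) :
    dist O₁ O₂ + dist O₂ O₃ + dist O₃ O₁ ≤
      dist P₁ P₂ + dist P₂ P₃ + dist P₃ P₁ + 3 * Real.sqrt 3 * R := by
  have hnorm {O P : EuclideanSpace ℝ (Fin 2)} (h : dist P O = R) : ‖O - P‖ ≤ R := by
    rw [← dist_eq_norm, dist_comm, h]
  have := dist_add_dist_add_dist_le_of_norm_le (hnorm h₁) (hnorm h₂) (hnorm h₃)
  linarith [dist_le_dist_add_dist_sub_sub O₁ O₂ P₁ P₂, dist_le_dist_add_dist_sub_sub O₂ O₃ P₂ P₃,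
    dist_le_dist_add_dist_sub_sub O₃ O₁ P₃ P₁]

theorem stmt_12 (R : ℝ) (hR : 0 < R)
    (O₁ O₂ O₃ P₁ P₂ P₃ : EuclideanSpace ℝ (Fin 2))
    (h₁ : dist P₁ O₁ = R) (h₂ : dist P₂ O₂ = R) (h₃ : dist P₃ O₃ = R) :
    dist O₁ O₂ + dist O₂ O₃ + dist O₃ O₁ ≤
      dist P₁ P₂ + dist P₂ P₃ + dist P₃ P₁ + 3 * Real.sqrt 3 * R :=
  stmt_12_general R O₁ O₂ O₃ P₁ P₂ P₃ h₁ h₂ h₃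
end
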